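/- Let V: ℂ^{|A'|} → ℂ^{|A|} be an isometry (VᴴV = 1_{|A'|}), let V(·) := V·Vᴴ be the corresponding isometry channel with Choi state Φ^V = (1/|A'|)·vec(V)vec(V)ᴴ where vec(V) := ∑_i e_i ⊗ V e_i, and let γ be a positive definite state on ℂ^{|A|}. Then the max-relative entropy between the Choi state of V and the Choi state π_{A'} ⊗ γ of the absolutely thermal channel T(X) := tr(X)γ equals D_∞(Φ^V ‖ π_{A'} ⊗ γ) = log tr(γ⁻¹ V Vᴴ), where π_{A'} := 1_{|A'|}/|A'|. -/

import Mathlib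

open scoped ComplexOrder Kronecker
open Matrix

noncomputable section

/-- Square complex matrices indexed by `ι`. -/
abbrev Mat (ι : Type) : Type := Matrix ι ι ℂ

/-- A quantum state: a positive semidefinite matrix of trace one. -/
def IsState {ι : Type} [Fintype ι] (ρ : Mat ι) : Prop :=
  ρ.PosSemidef ∧ ρ.trace = 1

/-- Max-relative entropy `D_∞(ρ‖σ) = log₂ inf {λ ≥ 0 : λ•σ − ρ ⪰ 0}` as an extended real;
it is `+∞` (`sInf ∅ = ⊤`) when no such `λ` exists. -/
def Dmax {ι : Type} [Fintype ι] (ρ σ : Mat ι) : EReal :=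
  sInf {x : EReal | ∃ l : ℝ, 0 ≤ l ∧ ((l : ℂ) • σ - ρ).PosSemidef ∧
    x = ((Real.logb 2 l : ℝ) : EReal)}

/-- Partial trace over the first tensor factor. -/
def trFst {ιA ιB : Type} [Fintype ιA] (ρ : Matrix (ιA × ιB) (ιA × ιB) ℂ) : Mat ιB :=
  Matrix.of fun i j => ∑ k : ιA, ρ (k, i) (k, j)

/-- Partial trace over the second tensor factor. -/
def trSnd {ιA ιB : Type} [Fintype ιB] (ρ : Matrix (ιA × ιB) (ιA × ιB) ℂ) : Mat ιA :=
  Matrix.of fun i j => ∑ k : ιB, ρ (i, k) (j, k)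

/-- Conditional min-entropy `S_∞(A|B)_ρ := −inf over states σ on B of D_∞(ρ‖1_A⊗σ)`. -/
def condMin {ιA ιB : Type} [Fintype ιA] [DecidableEq ιA] [Fintype ιB]
    (ρ : Matrix (ιA × ιB) (ιA × ιB) ℂ) : EReal :=
  -(⨅ σ : {σ : Mat ιB // IsState σ}, Dmax ρ ((1 : Mat ιA) ⊗ₖ σ.1))

/-- `S↓_∞(A|B)_ρ := −D_∞(ρ‖1_A⊗ρ_B)` with `ρ_B = tr_A ρ`. -/
def condMinDown {ιA ιB : Type} [Fintype ιA] [DecidableEq ιA] [Fintype ιB]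
    (ρ : Matrix (ιA × ιB) (ιA × ιB) ℂ) : EReal :=
  -(Dmax ρ ((1 : Mat ιA) ⊗ₖ trFst ρ))

/-- The (unnormalized) Choi matrix of a linear map of matrices. -/
def choiMatrix {ι κ : Type} [DecidableEq ι] (L : Mat ι →ₗ[ℂ] Mat κ) :
    Matrix (ι × κ) (ι × κ) ℂ :=
  Matrix.of fun p q => L (Matrix.single p.1 q.1 1) p.2 q.2

/-- A quantum channel: a linear map that is completely positive (positive semidefinite Choi
matrix) and trace preserving. -/
def IsChannel {ι κ : Type} [Fintype ι] [DecidableEq ι] [Fintype κ]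
    (L : Mat ι →ₗ[ℂ] Mat κ) : Prop :=
  (choiMatrix L).PosSemidef ∧ ∀ X : Mat ι, (L X).trace = X.trace

/-- The Choi state `Φ^L = (id⊗L)(Φ_d)` of a linear map of matrices. -/
def choiState {ι κ : Type} [Fintype ι] [DecidableEq ι] (L : Mat ι →ₗ[ℂ] Mat κ) :
    Matrix (ι × κ) (ι × κ) ℂ :=
  ((Fintype.card ι : ℂ))⁻¹ • choiMatrix L

/-- The Choi state of a bipartite channel `N : A'B' → AB`, re-indexed across
the cut `R_A A : R_B B`. -/
def biChoiState {ιA' ιB' κA κB : Type} [Fintype ιA'] [DecidableEq ιA']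
    [Fintype ιB'] [DecidableEq ιB'] (N : Mat (ιA' × ιB') →ₗ[ℂ] Mat (κA × κB)) :
    Matrix ((ιA' × κA) × (ιB' × κB)) ((ιA' × κA) × (ιB' × κB)) ℂ :=
  Matrix.of fun p q =>
    choiState N ((p.1.1, p.2.1), (p.1.2, p.2.2)) ((q.1.1, q.2.1), (q.1.2, q.2.2))

/-- Conditional min-entropy of a bipartite channel:
`S_∞[A|B]_N := −inf over channels Q : B'→B of D_∞(Φ^N ‖ 1_{R_A A} ⊗ Φ^Q) − log₂|A'|`. -/
def chanCondMin {ιA' ιB' κA κB : Type}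
    [Fintype ιA'] [DecidableEq ιA'] [Fintype ιB'] [DecidableEq ιB']
    [Fintype κA] [DecidableEq κA] [Fintype κB] [DecidableEq κB]
    (N : Mat (ιA' × ιB') →ₗ[ℂ] Mat (κA × κB)) : EReal :=
  (-(⨅ Q : {Q : Mat ιB' →ₗ[ℂ] Mat κB // IsChannel Q},
      Dmax (biChoiState N) ((1 : Mat (ιA' × κA)) ⊗ₖ choiState Q.1)))
    - ((Real.logb 2 (Fintype.card ιA' : ℝ) : ℝ) : EReal)

/-- Rank-one projector `|v⟩⟨v|` associated with a vector. -/
def outer {ι : Type} (v : ι → ℂ) : Mat ι := Matrix.vecMulVec v (star v)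

/-- Vectorization `vec(V) := ∑ i, e_i ⊗ V e_i` of a matrix `V : ℂ^ι → ℂ^κ`. -/
def vecRect {ι κ : Type} (V : Matrix κ ι ℂ) : ι × κ → ℂ := fun p => V p.2 p.1

/-- A maximally entangled state on `ι1 × ι2`: `|φ⟩⟨φ|` with
`|φ⟩ = (1/√d) ∑ i, e_i ⊗ f_i` for orthonormal families `e`, `f`, `d = min(|ι1|,|ι2|)`. -/
def IsMaxEntangled {ι1 ι2 : Type} [Fintype ι1] [Fintype ι2]
    (Φ : Matrix (ι1 × ι2) (ι1 × ι2) ℂ) : Prop :=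
  ∃ (e : Fin (min (Fintype.card ι1) (Fintype.card ι2)) → ι1 → ℂ)
    (f : Fin (min (Fintype.card ι1) (Fintype.card ι2)) → ι2 → ℂ),
    (∀ i j, ∑ x : ι1, (starRingEnd ℂ) (e i x) * e j x = if i = j then 1 else 0) ∧
    (∀ i j, ∑ x : ι2, (starRingEnd ℂ) (f i x) * f j x = if i = j then 1 else 0) ∧
    Φ = outer (fun p => (((Real.sqrt (min (Fintype.card ι1) (Fintype.card ι2) : ℝ))⁻¹ : ℝ) : ℂ) *
      ∑ i, e i p.1 * f i p.2)

/-- Partial transpose over the second tensor factor. -/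
def ptransposeSnd {ιA ιB : Type} (ρ : Matrix (ιA × ιB) (ιA × ιB) ℂ) :
    Matrix (ιA × ιB) (ιA × ιB) ℂ :=
  Matrix.of fun p q => ρ (p.1, q.2) (q.1, p.2)

/-- A bipartite state is PPT if its partial transpose is positive semidefinite. -/
def IsPPT {ιA ιB : Type} [Fintype ιA] [Fintype ιB]
    (ρ : Matrix (ιA × ιB) (ιA × ιB) ℂ) : Prop :=
  (ptransposeSnd ρ).PosSemidef

/-- Conjugation channel `X ↦ W X Wᴴ`. -/
def conjMap {ι κ : Type} [Fintype ι] (W : Matrix κ ι ℂ) : Mat ι →ₗ[ℂ] Mat κ where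
  toFun X := W * X * Wᴴ
  map_add' X Y := by simp [Matrix.mul_add, Matrix.add_mul]
  map_smul' c X := by simp [Matrix.mul_smul, Matrix.smul_mul]

/-- The controlled unitary matrix `∑ j, |j⟩⟨j| ⊗ U_j`. -/
def ctrlU {n m : ℕ} (U : Fin n → Mat (Fin m)) : Mat (Fin n × Fin m) :=
  Matrix.of fun p q => (if p.1 = q.1 then 1 else 0) * U p.1 p.2 q.2

/-- The replacer channel `X ↦ tr(X) • γ`. -/
def replacer {ι κ : Type} [Fintype ι] (γ : Mat κ) : Mat ι →ₗ[ℂ] Mat κ where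
  toFun X := X.trace • γ
  map_add' X Y := by simp [Matrix.trace_add, add_smul]
  map_smul' c X := by simp [Matrix.trace_smul, mul_smul]

/-- The maximally mixed state `π_m = 1_m / m`. -/
def uniformState (m : ℕ) : Mat (Fin m) := ((m : ℂ))⁻¹ • (1 : Mat (Fin m))

/-- Tensor product of two linear maps of matrices. -/
def tensorL {ι1 κ1 ι2 κ2 : Type} [Fintype ι1] [DecidableEq ι1]
    (L1 : Mat ι1 →ₗ[ℂ] Mat κ1) (L2 : Mat ι2 →ₗ[ℂ] Mat κ2) :
    Mat (ι1 × ι2) →ₗ[ℂ] Mat (κ1 × κ2) where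
  toFun X := Matrix.of fun p q =>
    ∑ i1 : ι1, ∑ j1 : ι1,
      L1 (Matrix.single i1 j1 1) p.1 q.1 *
        L2 (Matrix.of fun i2 j2 => X (i1, i2) (j1, j2)) p.2 q.2
  map_add' X Y := by
    ext p q
    have h : ∀ i1 j1 : ι1,
        (Matrix.of fun i2 j2 => X (i1, i2) (j1, j2) + Y (i1, i2) (j1, j2)) =
          (Matrix.of fun i2 j2 => X (i1, i2) (j1, j2)) +
            (Matrix.of fun i2 j2 => Y (i1, i2) (j1, j2)) := by
      intro i1 j1; ext i2 j2; simp
    simp only [Matrix.add_apply, Matrix.of_apply, h, map_add, mul_add,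
      Finset.sum_add_distrib]
  map_smul' c X := by
    ext p q
    have h : ∀ i1 j1 : ι1,
        (Matrix.of fun i2 j2 => c * X (i1, i2) (j1, j2)) =
          c • (Matrix.of fun i2 j2 => X (i1, i2) (j1, j2)) := by
      intro i1 j1; ext i2 j2; simp
    simp only [Matrix.smul_apply, smul_eq_mul, Matrix.of_apply, RingHom.id_apply, h,
      LinearMap.map_smul]
    rw [Finset.mul_sum]
    refine Finset.sum_congr rfl fun i1 _ => ?_
    rw [Finset.mul_sum]
    refine Finset.sum_congr rfl fun j1 _ => ?_
    ring


/-- Square root of a positive semidefinite matrix (junk value `0` otherwise). -/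
def matSqrt {ι : Type} [Fintype ι] [DecidableEq ι] (M : Mat ι) : Mat ι :=
  letI := Classical.dec M.PosSemidef
  if h : M.PosSemidef then
    (h.1.eigenvectorUnitary : Mat ι) * diagonal ((↑) ∘ (h.1.eigenvalues · |>.sqrt)) *
      (star h.1.eigenvectorUnitary : Mat ι)
  else 0

/-- Trace norm `‖X‖₁ = tr √(XᴴX)`. -/
def traceNorm {ι : Type} [Fintype ι] [DecidableEq ι] (X : Mat ι) : ℝ :=
  (matSqrt (Xᴴ * X)).trace.re

/-- Fidelity `F(ρ,σ) = ‖√ρ√σ‖₁²`. -/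
def fidelity {ι : Type} [Fintype ι] [DecidableEq ι] (ρ σ : Mat ι) : ℝ :=
  (traceNorm (matSqrt ρ * matSqrt σ)) ^ 2

/-- Purified distance `P(ρ,σ) = √(1 − F(ρ,σ))`. -/
def purifiedDist {ι : Type} [Fintype ι] [DecidableEq ι] (ρ σ : Mat ι) : ℝ :=
  Real.sqrt (1 - fidelity ρ σ)

/-- Purified channel distance `P[N,M] = sup over states ψ of P((id⊗N)ψ, (id⊗M)ψ)`. -/
def purifiedChannelDist {ι κ : Type} [Fintype ι] [DecidableEq ι] [Fintype κ] [DecidableEq κ]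
    (L1 L2 : Mat ι →ₗ[ℂ] Mat κ) : ℝ :=
  ⨆ ψ : {ψ : Matrix (ι × ι) (ι × ι) ℂ // IsState ψ},
    purifiedDist (tensorL (LinearMap.id : Mat ι →ₗ[ℂ] Mat ι) L1 ψ.1)
      (tensorL (LinearMap.id : Mat ι →ₗ[ℂ] Mat ι) L2 ψ.1)

/-- Diamond norm `‖L‖◊ = sup over states ρ on R⊗in (R ≃ in) of ‖(id⊗L)ρ‖₁`. -/
def diamondNorm {ι κ : Type} [Fintype ι] [DecidableEq ι] [Fintype κ] [DecidableEq κ]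
    (L : Mat ι →ₗ[ℂ] Mat κ) : ℝ :=
  ⨆ ρ : {ρ : Matrix (ι × ι) (ι × ι) ℂ // IsState ρ},
    traceNorm (tensorL (LinearMap.id : Mat ι →ₗ[ℂ] Mat ι) L ρ.1)

/-- `−log₂ t`, as an extended real which is `+∞` for `t ≤ 0`. -/
def negLogE (t : ℝ) : EReal := if t ≤ 0 then ⊤ else ((-Real.logb 2 t : ℝ) : EReal)

/-- Hypothesis-testing relative entropy
`D_H^ε(ρ‖σ) = −log₂ inf{tr(Λσ) : 0 ≤ Λ ≤ 1, tr(Λρ) ≥ 1−ε}`. -/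
def DH {ι : Type} [Fintype ι] [DecidableEq ι] (ε : ℝ) (ρ σ : Mat ι) : EReal :=
  negLogE (sInf {t : ℝ | ∃ Λ : Mat ι, Λ.PosSemidef ∧ ((1 : Mat ι) - Λ).PosSemidef ∧
    1 - ε ≤ ((Λ * ρ).trace).re ∧ t = ((Λ * σ).trace).re})

/-- Channel hypothesis-testing relative entropy
`D_H^ε[N‖M] = sup over states ψ of D_H^ε((id⊗N)ψ‖(id⊗M)ψ)`. -/
def DHchan {ι κ : Type} [Fintype ι] [DecidableEq ι] [Fintype κ] [DecidableEq κ]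
    (ε : ℝ) (L1 L2 : Mat ι →ₗ[ℂ] Mat κ) : EReal :=
  ⨆ ψ : {ψ : Matrix (ι × ι) (ι × ι) ℂ // IsState ψ},
    DH ε (tensorL (LinearMap.id : Mat ι →ₗ[ℂ] Mat ι) L1 ψ.1)
      (tensorL (LinearMap.id : Mat ι →ₗ[ℂ] Mat ι) L2 ψ.1)

/-- Channel max-relative entropy `D_∞[N‖M] = D_∞(Φ^N‖Φ^M)`. -/
def DmaxChan {ι κ : Type} [Fintype ι] [DecidableEq ι] [Fintype κ]
    (L1 L2 : Mat ι →ₗ[ℂ] Mat κ) : EReal :=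
  Dmax (choiState L1) (choiState L2)

/-- Smoothed channel max-relative entropy
`D_∞^ε[N‖M] = inf{D_∞[Ñ‖M] : Ñ a channel with (1/2)P[N,Ñ] ≤ ε}`. -/
def DmaxChanSmooth {ι κ : Type} [Fintype ι] [DecidableEq ι] [Fintype κ] [DecidableEq κ]
    (ε : ℝ) (L1 L2 : Mat ι →ₗ[ℂ] Mat κ) : EReal :=
  ⨅ Nt : {Nt : Mat ι →ₗ[ℂ] Mat κ //
      IsChannel Nt ∧ 2⁻¹ * purifiedChannelDist L1 Nt ≤ ε},
    DmaxChan Nt.1 L2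

/-- A quantum superchannel: `Θ(N) = post ∘ (id_E ⊗ N) ∘ pre` for channels `pre`, `post`
and a finite-dimensional memory `E`. -/
structure Superchannel (ι1 κ1 ι2 κ2 : Type) [Fintype ι1] [DecidableEq ι1]
    [Fintype κ1] [DecidableEq κ1] [Fintype ι2] [DecidableEq ι2]
    [Fintype κ2] [DecidableEq κ2] where
  e : ℕ
  pre : Mat ι2 →ₗ[ℂ] Mat (Fin e × ι1)
  post : Mat (Fin e × κ1) →ₗ[ℂ] Mat κ2
  pre_channel : IsChannel pre
  post_channel : IsChannel post

/-- Action of a superchannel on a linear map. -/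
def Superchannel.apply {ι1 κ1 ι2 κ2 : Type} [Fintype ι1] [DecidableEq ι1]
    [Fintype κ1] [DecidableEq κ1] [Fintype ι2] [DecidableEq ι2]
    [Fintype κ2] [DecidableEq κ2] (Θ : Superchannel ι1 κ1 ι2 κ2)
    (L : Mat ι1 →ₗ[ℂ] Mat κ1) : Mat ι2 →ₗ[ℂ] Mat κ2 :=
  Θ.post ∘ₗ (tensorL (LinearMap.id : Mat (Fin Θ.e) →ₗ[ℂ] Mat (Fin Θ.e)) L) ∘ₗ Θ.pre


/-- A conditional Gibbs-preserving superchannel (distillation direction): it maps every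
conditionally thermalizing channel `T^β ⊗ Q̃` to a conditionally uniformly mixing channel
`R^π_m ⊗ Q̃'` for some side channel `Q̃'`. -/
def IsCGPSdist {a' b' a b m d' d : ℕ} (γ : Mat (Fin a))
    (Θ : Superchannel (Fin a' × Fin b') (Fin a × Fin b) (Fin m × Fin d') (Fin m × Fin d)) :
    Prop :=
  ∀ Qt : Mat (Fin b') →ₗ[ℂ] Mat (Fin b), IsChannel Qt →
    ∃ Qt' : Mat (Fin d') →ₗ[ℂ] Mat (Fin d), IsChannel Qt' ∧
      Θ.apply (tensorL (replacer γ) Qt) = tensorL (replacer (uniformState m)) Qt'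

/-- A conditional Gibbs-preserving superchannel (formation direction): it maps every
conditionally uniformly mixing channel `R^π_m ⊗ Q̃` to a conditionally thermalizing channel
`T^β ⊗ Q̃'` for some side channel `Q̃'`. -/
def IsCGPScost {a' b' a b m d' d : ℕ} (γ : Mat (Fin a))
    (Θ : Superchannel (Fin m × Fin d') (Fin m × Fin d) (Fin a' × Fin b') (Fin a × Fin b)) :
    Prop :=
  ∀ Qt : Mat (Fin d') →ₗ[ℂ] Mat (Fin d), IsChannel Qt →
    ∃ Qt' : Mat (Fin b') →ₗ[ℂ] Mat (Fin b), IsChannel Qt' ∧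
      Θ.apply (tensorL (replacer (uniformState m)) Qt) = tensorL (replacer γ) Qt'

/-- One-shot conditional athermality distillation yield `Dist^{(1,ε)}(N, T^β)`:
the worst case over side channels `Q` of the largest `log₂ m` such that some conditional
Gibbs-preserving superchannel converts `(N, T^β⊗Q)` into `(id_m⊗Q', R^π_m⊗Q')`
within purified channel distance `ε`. -/
def DistOneShot {a' b' a b : ℕ} (N : Mat (Fin a' × Fin b') →ₗ[ℂ] Mat (Fin a × Fin b))
    (γ : Mat (Fin a)) (ε : ℝ) : EReal :=
  ⨅ Q : {Q : Mat (Fin b') →ₗ[ℂ] Mat (Fin b) // IsChannel Q},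
    sSup {x : EReal | ∃ m d' d : ℕ, ∃ Q' : Mat (Fin d') →ₗ[ℂ] Mat (Fin d),
      ∃ Θ : Superchannel (Fin a' × Fin b') (Fin a × Fin b) (Fin m × Fin d') (Fin m × Fin d),
        IsChannel Q' ∧ IsCGPSdist γ Θ ∧
        Θ.apply (tensorL (replacer γ) Q.1) = tensorL (replacer (uniformState m)) Q' ∧
        purifiedChannelDist
          (tensorL (LinearMap.id : Mat (Fin m) →ₗ[ℂ] Mat (Fin m)) Q') (Θ.apply N) ≤ ε ∧
        x = ((Real.logb 2 (m : ℝ) : ℝ) : EReal)}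

/-- One-shot conditional athermality formation cost `Cost^{(1,ε)}(N, T^β)`:
the best case over side channels `Q` of the least `log₂ m` such that some conditional
Gibbs-preserving superchannel converts `(id_m⊗Q'', R^π_m⊗Q'')` into `(N, T^β⊗Q)`
within purified channel distance `ε`. -/
def CostOneShot {a' b' a b : ℕ} (N : Mat (Fin a' × Fin b') →ₗ[ℂ] Mat (Fin a × Fin b))
    (γ : Mat (Fin a)) (ε : ℝ) : EReal :=
  ⨅ Q : {Q : Mat (Fin b') →ₗ[ℂ] Mat (Fin b) // IsChannel Q},
    sInf {x : EReal | ∃ m d' d : ℕ, ∃ Q'' : Mat (Fin d') →ₗ[ℂ] Mat (Fin d),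
      ∃ Θ : Superchannel (Fin m × Fin d') (Fin m × Fin d) (Fin a' × Fin b') (Fin a × Fin b),
        IsChannel Q'' ∧ IsCGPScost γ Θ ∧
        Θ.apply (tensorL (replacer (uniformState m)) Q'') = tensorL (replacer γ) Q.1 ∧
        purifiedChannelDist N
          (Θ.apply (tensorL (LinearMap.id : Mat (Fin m) →ₗ[ℂ] Mat (Fin m)) Q'')) ≤ ε ∧
        x = ((Real.logb 2 (m : ℝ) : ℝ) : EReal)}


/-- A bipartite channel `N : A'B' → AB` is no-signaling (semicausal) from `A'` to `B`:
`tr_A ∘ N = tr_{A'} ⊗ Q` for some channel `Q : B' → B`. -/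
def NoSignalFstToSnd {ιA' ιB' κA κB : Type} [Fintype ιA'] [DecidableEq ιA']
    [Fintype ιB'] [DecidableEq ιB'] [Fintype κA] [Fintype κB]
    (N : Mat (ιA' × ιB') →ₗ[ℂ] Mat (κA × κB)) : Prop :=
  ∃ Q : Mat ιB' →ₗ[ℂ] Mat κB, IsChannel Q ∧
    ∀ X : Mat (ιA' × ιB'), trFst (N X) = Q (trFst X)

end

/-!
Writing `G := 1 ⊗ γ` and `v := vec V`, the Choi states are `Φ^V = vv*/|A'|` and
`π_{A'} ⊗ γ = G/|A'|`, so the claim is `D_∞(vv* ‖ G) = log ⟨v, G⁻¹v⟩`. For positive definite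
`G` and `λ > 0`, taking Schur complements of the block matrix `[1, v*; v, λG]` on either side gives
`λG - vv* ⪰ 0 ↔ ⟨v, G⁻¹v⟩ ≤ λ`. Finally `⟨vec V, (1 ⊗ γ⁻¹) vec V⟩ = tr(Vᴴγ⁻¹V) = tr(γ⁻¹VVᴴ)`.
-/

lemma Matrix.posSemidef_iff_nonneg_of_unique {ι R : Type*} [Unique ι] [Ring R] [PartialOrder R]
    [StarRing R] [StarOrderedRing R] (M : Matrix ι ι R) :
    M.PosSemidef ↔ 0 ≤ M default default := by
  have hM : M = diagonal fun _ => M default default := by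
    ext i j
    rw [Subsingleton.elim i default, Subsingleton.elim j default, diagonal_apply_eq]
  conv_lhs => rw [hM]
  rw [posSemidef_diagonal_iff, Unique.forall_iff]

lemma Matrix.posSemidef_smul_iff {n : Type*} [Fintype n] {A : Matrix n n ℂ} {c : ℂ} (hc : 0 < c) :
    (c • A).PosSemidef ↔ A.PosSemidef := by
  refine ⟨fun h => ?_, fun h => h.smul hc.le⟩
  simpa [smul_smul, inv_mul_cancel₀ hc.ne'] using h.smul (inv_pos.mpr hc).le

lemma Matrix.PosDef.posSemidef_smul_sub_vecMulVec_iff {n : Type*} [Fintype n] [DecidableEq n]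
    {G : Matrix n n ℂ} (hG : G.PosDef) (v : n → ℂ) {c : ℂ} (hc : 0 < c) :
    (c • G - vecMulVec v (star v)).PosSemidef ↔ star v ⬝ᵥ G⁻¹ *ᵥ v ≤ c := by
  have hcG : (c • G).PosDef := hG.smul hc
  let _ := hcG.isUnit.invertible
  let _ : Invertible (1 : Matrix Unit Unit ℂ) := invertibleOne
  let _ := invertibleOfNonzero hc.ne'
  have h₁₁ := PosDef.fromBlocks₁₁ (replicateRow Unit (star v)) (c • G) PosDef.one
  have h₂₂ := PosDef.fromBlocks₂₂ 1 (replicateRow Unit (star v)) hcG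
  rw [conjTranspose_replicateRow, star_star] at h₁₁ h₂₂
  rw [inv_one, Matrix.mul_one, ← vecMulVec_eq] at h₁₁
  rw [Matrix.inv_smul G c ((isUnit_iff_isUnit_det G).mp hG.isUnit), invOf_eq_inv,
    Matrix.mul_assoc, ← replicateCol_mulVec, replicateRow_mul_replicateCol,
    posSemidef_iff_nonneg_of_unique (_ - _)] at h₂₂
  rw [← h₁₁, h₂₂]
  simp only [Matrix.sub_apply, one_apply_eq, of_apply, smul_mulVec, dotProduct_smul, smul_eq_mul,
    sub_nonneg, inv_mul_le_iff₀ hc, mul_one]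

section Dmax

variable {ι : Type} [Fintype ι]

lemma dmax_smul_smul (ρ σ : Mat ι) {c : ℂ} (hc : 0 < c) : Dmax (c • ρ) (c • σ) = Dmax ρ σ := by
  simp only [Dmax, smul_comm _ c σ, ← smul_sub, posSemidef_smul_iff hc]

lemma dmax_eq_logb {ρ σ : Mat ι} (hρ : ρ.PosSemidef) (hρ0 : ρ ≠ 0) {t : ℝ} (ht : 0 < t)
    (h : ∀ l : ℝ, 0 < l → (((l : ℂ) • σ - ρ).PosSemidef ↔ t ≤ l)) :
    Dmax ρ σ = Real.logb 2 t := by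
  unfold Dmax
  refine le_antisymm (sInf_le ⟨t, ht.le, (h t ht).2 le_rfl, rfl⟩) (le_sInf ?_)
  rintro _ ⟨l, hl, hadm, rfl⟩
  obtain rfl | hl := hl.eq_or_lt
  · open scoped MatrixOrder in
    refine absurd (le_antisymm (le_iff.mpr ?_) hρ.nonneg) hρ0
    simpa using hadm
  · exact EReal.coe_le_coe_iff.mpr (Real.logb_le_logb_of_le one_lt_two ht ((h l hl).1 hadm))

variable [DecidableEq ι]

lemma dmax_outer_eq_logb {G : Mat ι} (hG : G.PosDef) {v : ι → ℂ} (hv : v ≠ 0) :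
    Dmax (outer v) G = Real.logb 2 (star v ⬝ᵥ G⁻¹ *ᵥ v).re := by
  have hpos : 0 < star v ⬝ᵥ G⁻¹ *ᵥ v := hG.inv.dotProduct_mulVec_pos hv
  refine dmax_eq_logb (posSemidef_vecMulVec_self_star v) (by simpa [outer] using hv)
    (Complex.pos_iff.mp hpos).1 fun l hl => ?_
  rw [hG.posSemidef_smul_sub_vecMulVec_iff v (by exact_mod_cast hl)]
  nth_rw 1 [Complex.eq_re_of_ofReal_le hpos.le]
  exact Complex.real_le_real

end Dmax

lemma star_vec_dotProduct_one_kronecker_mulVec_vec {ι κ : Type*} [Fintype ι] [DecidableEq ι]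
    [Fintype κ] (V : Matrix κ ι ℂ) (M : Matrix κ κ ℂ) :
    star (vec V) ⬝ᵥ (1 ⊗ₖ M) *ᵥ vec V = (M * (V * Vᴴ)).trace := by
  rw [← vec_mul_eq_mulVec, star_vec_dotProduct_vec, trace_mul_comm, Matrix.mul_assoc]

theorem dmax_isometry_choi_vs_thermal_choi_general
    {a' a : ℕ} [NeZero a'] (V : Matrix (Fin a) (Fin a') ℂ)
    (hV : Vᴴ * V = 1) (γ : Mat (Fin a)) (hγpd : γ.PosDef) :
    Dmax (((a' : ℂ))⁻¹ • outer (vecRect V))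
        ((((a' : ℂ))⁻¹ • (1 : Mat (Fin a'))) ⊗ₖ γ) =
      ((Real.logb 2 ((γ⁻¹ * (V * Vᴴ)).trace.re) : ℝ) : EReal) := by
  have ha' : (0 : ℂ) < (a' : ℂ)⁻¹ := inv_pos.mpr (by exact_mod_cast Nat.pos_of_neZero a')
  have hV0 : vec V ≠ 0 := by
    rw [Ne, vec_eq_zero_iff]
    rintro rfl
    simp at hV
  rw [smul_kronecker, dmax_smul_smul _ _ ha', show vecRect V = vec V from rfl,
    dmax_outer_eq_logb (PosDef.one.kronecker hγpd) hV0, inv_kronecker, inv_one,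
    star_vec_dotProduct_one_kronecker_mulVec_vec]

/-- For an isometry `V : ℂ^{|A'|} → ℂ^{|A|}` with isometry channel
`X ↦ VXVᴴ` of Choi state `Φ^V = (1/|A'|)·vec(V)vec(V)ᴴ`, and a positive definite state `γ`
on `ℂ^{|A|}`, the max-relative entropy to the Choi state `π_{A'} ⊗ γ` of the absolutely
thermal channel `T(X) = tr(X)γ` equals `D_∞(Φ^V ‖ π_{A'} ⊗ γ) = log₂ tr(γ⁻¹ V Vᴴ)`. -/
theorem dmax_isometry_choi_vs_thermal_choi
    {a' a : ℕ} [NeZero a'] [NeZero a] (V : Matrix (Fin a) (Fin a') ℂ)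
    (hV : Vᴴ * V = 1) (γ : Mat (Fin a)) (hγ : IsState γ) (hγpd : γ.PosDef) :
    Dmax (((a' : ℂ))⁻¹ • outer (vecRect V))
        ((((a' : ℂ))⁻¹ • (1 : Mat (Fin a'))) ⊗ₖ γ) =
      ((Real.logb 2 ((γ⁻¹ * (V * Vᴴ)).trace.re) : ℝ) : EReal) :=
  dmax_isometry_choi_vs_thermal_choi_general V hV γ hγpd
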